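/- arXiv:1903.01021 — 2 statements merged into one kernel-verified Lean document; each statement's English description precedes it below -/
import Mathlib

section
/- With P_μ-probability 1, inf_t w(μ|h_{<t}) > 0, i.e., the Bayesian posterior weight of the true environment stays bounded away from zero along almost every infinite history. -/
open MeasureTheory Filter

/-- The cylinder set of infinite sequences beginning with the finite history `h`. -/
def cylinder {H : Type*} (h : List H) : Set (ℕ → H) :=
  {ω | ∀ i : Fin h.length, ω i = h.get i}

/-!
Because `Pξ` is additive over one-step extensions, the likelihood ratio `Pξ h / P (cylinder h)`
along the history is a nonnegative supermartingale under `P`. Ville's maximal inequality bounds the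
probability that it ever reaches `n` by `Pξ [] / n`, so almost surely `Pξ h_{<t} < n Pμ h_{<t}`
for some `n` and all `t`, and then `w(μ|h_{<t}) ≥ wμ / n`.

The maximal inequality needs no conditional expectations: the minimal histories at which the ratio
reaches `n` form a prefix antichain whose cylinders cover the event, and the total `Pξ`-weight of a
prefix antichain is at most `Pξ []`.
-/

open scoped ENNReal

theorem ENNReal.tsum_indicator_le_of_subset_singleton {α : Type*} {S : Set α} {a : α}
    (hS : S ⊆ {a}) (f : α → ℝ≥0∞) : ∑' x, S.indicator f x ≤ f a :=
  calc ∑' x, S.indicator f x ≤ ∑' x, ({a} : Set α).indicator f x :=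
        ENNReal.tsum_le_tsum (Set.indicator_le_indicator_of_subset hS fun _ => zero_le)
    _ = f a := by rw [← tsum_subtype, tsum_singleton]

namespace List

variable {H : Type*}

theorem tsum_indicator_le_of_isAntichain_prefix_of_length_le {Q : List H → ℝ≥0∞}
    (hQ : ∀ h, ∑' x, Q (h ++ [x]) ≤ Q h) {S : Set (List H)} (hS : IsAntichain (· <+: ·) S)
    {d : ℕ} (hlen : ∀ h ∈ S, h.length ≤ d) :
    ∑' h, S.indicator Q h ≤ Q [] := by
  induction d generalizing Q S with
  | zero =>
    exact ENNReal.tsum_indicator_le_of_subset_singleton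
      (fun h hh => eq_nil_of_length_eq_zero (Nat.le_zero.1 (hlen h hh))) Q
  | succ d ih =>
    by_cases hnil : [] ∈ S
    · refine ENNReal.tsum_indicator_le_of_subset_singleton (fun h hh => ?_) Q
      by_contra hne
      exact hS hnil hh (Ne.symm hne) nil_prefix
    have hcons : Function.Injective fun p : H × List H => p.1 :: p.2 :=
      fun p q hpq => Prod.ext (cons.inj hpq).1 (cons.inj hpq).2
    have hsupp : Function.support (S.indicator Q) ⊆ Set.range fun p : H × List H => p.1 :: p.2 := by
      intro h hh
      obtain ⟨x, t, rfl⟩ :=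
        exists_cons_of_ne_nil (ne_of_mem_of_not_mem (Set.mem_of_indicator_ne_zero hh) hnil)
      exact ⟨(x, t), rfl⟩
    -- Split off the first letter: `Q ∘ cons x` and `cons x ⁻¹' S` satisfy the hypotheses again.
    calc ∑' h, S.indicator Q h = ∑' (x) (t), (cons x ⁻¹' S).indicator (fun t => Q (x :: t)) t :=
          (hcons.tsum_eq hsupp).symm.trans
            (ENNReal.tsum_prod (f := fun x t => S.indicator Q (x :: t)))
      _ ≤ ∑' x, Q [x] := by
          refine ENNReal.tsum_le_tsum fun x => ih (fun t => hQ (x :: t)) ?_ ?_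
          · exact fun a ha b hb hab hpre =>
              hS ha hb (by simpa using hab) ((prefix_cons_inj x).2 hpre)
          · exact fun t ht => Nat.le_of_succ_le_succ (hlen _ ht)
      _ ≤ Q [] := hQ []

theorem tsum_indicator_le_of_isAntichain_prefix {Q : List H → ℝ≥0∞}
    (hQ : ∀ h, ∑' x, Q (h ++ [x]) ≤ Q h) {S : Set (List H)} (hS : IsAntichain (· <+: ·) S) :
    ∑' h, S.indicator Q h ≤ Q [] := by
  rw [ENNReal.tsum_eq_iSup_sum]
  refine iSup_le fun F => ?_
  rw [sum_eq_tsum_indicator, Set.indicator_indicator]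
  exact tsum_indicator_le_of_isAntichain_prefix_of_length_le hQ
    (hS.subset Set.inter_subset_right) fun h hh => Finset.le_sup (f := length) hh.1

end List

namespace Stream'

variable {H : Type*}

theorem eq_take_length_of_prefix_take {g : List H} {ω : Stream' H} {t : ℕ}
    (hg : g <+: take t ω) : g = take g.length ω := by
  have hlen : g.length ≤ t := by simpa using hg.length_le
  rw [List.prefix_iff_eq_take.1 hg, take_take, min_eq_right hlen, length_take]

theorem mem_cylinder_take (ω : Stream' H) (t : ℕ) : ω ∈ cylinder (take t ω) := by
  intro i
  simp [Stream'.get]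

theorem take_eq_ofFn (ω : Stream' H) (t : ℕ) : take t ω = List.ofFn fun i : Fin t => ω i :=
  List.ext_getElem (by simp) fun _ _ _ => by simp [Stream'.get]

theorem maximal_ineq_cylinder [Countable H] [MeasurableSpace H] (P : Measure (ℕ → H))
    {Q : List H → ℝ≥0∞} (hQ : ∀ h, ∑' x, Q (h ++ [x]) ≤ Q h) (c : ℝ≥0∞) :
    c * P {ω : ℕ → H | ∃ t, c * P (cylinder (take t ω)) ≤ Q (take t ω)} ≤ Q [] := by
  classical
  set reached : List H → Prop := fun h => c * P (cylinder h) ≤ Q h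
  set S : Set (List H) := {h | reached h ∧ ∀ g, g <+: h → reached g → g = h}
  have hS : IsAntichain (· <+: ·) S := fun a ha b hb hab hpre => hab (hb.2 a hpre ha.1)
  have hcover : {ω : ℕ → H | ∃ t, reached (take t ω)} ⊆ ⋃ h ∈ S, cylinder h := by
    rintro ω hω
    refine Set.mem_biUnion (x := take (Nat.find hω) ω) ⟨Nat.find_spec hω, fun g hg hg' => ?_⟩
      (mem_cylinder_take ω _)
    have hle : g.length ≤ Nat.find hω := hg.length_le.trans_eq (length_take _ _)
    rw [eq_take_length_of_prefix_take hg] at hg' ⊢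
    rw [le_antisymm hle (Nat.find_min' hω hg')]
  calc c * P {ω : ℕ → H | ∃ t, reached (take t ω)} ≤ c * ∑' h : S, P (cylinder h) :=
        mul_le_mul_right (measure_mono hcover |>.trans (measure_biUnion_le _ S.to_countable _)) c
    _ = ∑' h, S.indicator (fun h => c * P (cylinder h)) h := by
        rw [← ENNReal.tsum_mul_left, tsum_subtype S (fun h => c * P (cylinder h))]
    _ ≤ ∑' h, S.indicator Q h :=
        ENNReal.tsum_le_tsum fun h => Set.indicator_le_indicator' fun hh => hh.1
    _ ≤ Q [] := List.tsum_indicator_le_of_isAntichain_prefix hQ hS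

theorem ae_exists_forall_lt_mul_measure_cylinder [Countable H] [MeasurableSpace H]
    (P : Measure (ℕ → H)) {Q : List H → ℝ≥0∞} (hQ : ∀ h, ∑' x, Q (h ++ [x]) ≤ Q h)
    (hQnil : Q [] ≠ ∞) :
    ∀ᵐ ω : ℕ → H ∂P, ∃ n : ℕ, ∀ t, Q (take t ω) < n * P (cylinder (take t ω)) := by
  rw [ae_iff]
  set A := {ω : ℕ → H | ¬∃ n : ℕ, ∀ t, Q (take t ω) < n * P (cylinder (take t ω))}
  have hA : ∀ n : ℕ, n * P A ≤ Q [] := fun n =>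
    (mul_le_mul_right (measure_mono fun ω hω => by
      simp only [A, Set.mem_ofPred_eq, not_exists, not_forall, not_lt] at hω
      exact hω n) _).trans (maximal_ineq_cylinder P hQ n)
  by_contra hne
  obtain ⟨n, hn⟩ := ENNReal.exists_nat_mul_gt hne hQnil
  exact (hn.trans_le (hA n)).false

end Stream'

theorem div_le_mul_div_of_mul_le_of_lt_mul {w a b n : ℝ} (hw : 0 < w) (ha : 0 ≤ a)
    (hab : w * a ≤ b) (hbn : b < n * a) : w / n ≤ w * a / b := by
  have ha' : 0 < a := ha.lt_of_ne (by rintro rfl; linarith)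
  have hb : 0 < b := (mul_pos hw ha').trans_le hab
  have hn : 0 < n := pos_of_mul_pos_left (hb.trans hbn) ha
  rw [div_le_div_iff₀ hn hb]
  nlinarith

theorem stmt_5_general {H : Type*} [Countable H] [MeasurableSpace H]
    (P : Measure (ℕ → H)) [IsProbabilityMeasure P]
    (Pμ : List H → ℝ) (hPμ : ∀ h, Pμ h = (P (cylinder h)).toReal)
    (wμ : ℝ) (hwμ : 0 < wμ)
    (Pξ : List H → ℝ) (hPξ0 : ∀ h, 0 ≤ Pξ h)
    (hdom : ∀ h, wμ * Pμ h ≤ Pξ h)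
    (hadd : ∀ h, ∑' x : H, Pξ (h ++ [x]) = Pξ h)
    (hsum : ∀ h, Summable (fun x : H => Pξ (h ++ [x]))) :
    ∀ᵐ ω ∂P, 0 < ⨅ t : ℕ, wμ * Pμ (List.ofFn (fun i : Fin t => ω i)) /
      Pξ (List.ofFn (fun i : Fin t => ω i)) := by
  set Q : List H → ℝ≥0∞ := fun h => ENNReal.ofReal (Pξ h)
  have hQ : ∀ h, ∑' x, Q (h ++ [x]) ≤ Q h := fun h => by
    rw [← ENNReal.ofReal_tsum_of_nonneg (fun x => hPξ0 _) (hsum h), hadd]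
  filter_upwards [Stream'.ae_exists_forall_lt_mul_measure_cylinder P hQ ENNReal.ofReal_ne_top]
    with ω ⟨n, hn⟩
  have hbound : ∀ t, Pξ (Stream'.take t ω) < n * Pμ (Stream'.take t ω) := fun t => by
    have h := ENNReal.toReal_strict_mono
      (ENNReal.mul_ne_top (ENNReal.natCast_ne_top n) (measure_ne_top P _)) (hn t)
    rwa [ENNReal.toReal_ofReal (hPξ0 _), ENNReal.toReal_mul, ENNReal.toReal_natCast, ← hPμ] at h
  have hn0 : 0 < n := Nat.pos_of_ne_zero (by rintro rfl; simpa using hn 0)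
  refine lt_of_lt_of_le (by positivity : 0 < wμ / n) (le_ciInf fun t => ?_)
  have hratio :=
    div_le_mul_div_of_mul_le_of_lt_mul hwμ (by rw [hPμ]; positivity) (hdom _) (hbound t)
  -- `ω` has type `ℕ → H` rather than `Stream' H`, so `rw [Stream'.take_eq_ofFn]` finds no match.
  rwa [show Stream'.take t ω = List.ofFn (fun i : Fin t => ω i) from Stream'.take_eq_ofFn ω t]
    at hratio

/-- With P_μ-probability 1, the Bayesian posterior weight of the true
environment, w(μ|h_{<t}) = w(μ)·P_μ(h_{<t})/P_ξ(h_{<t}), stays bounded away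
from zero along the infinite history: inf_t w(μ|h_{<t}) > 0 almost surely.
Here Pμ is the cylinder-probability function of a probability measure P on
infinite sequences over a countable alphabet, and Pξ is a mixture-type
function dominating w(μ)·Pμ and satisfying the measure (additivity)
property over one-step extensions. -/
theorem stmt_5 {H : Type*} [Countable H] [MeasurableSpace H]
    [MeasurableSingletonClass H]
    (P : Measure (ℕ → H)) [IsProbabilityMeasure P]
    (Pμ : List H → ℝ) (hPμ : ∀ h, Pμ h = (P (cylinder h)).toReal)
    (wμ : ℝ) (hwμ : 0 < wμ) (hwμ1 : wμ ≤ 1)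
    (Pξ : List H → ℝ) (hPξ0 : ∀ h, 0 ≤ Pξ h) (hPξnil : Pξ [] = 1)
    (hdom : ∀ h, wμ * Pμ h ≤ Pξ h)
    (hadd : ∀ h, ∑' x : H, Pξ (h ++ [x]) = Pξ h)
    (hsum : ∀ h, Summable (fun x : H => Pξ (h ++ [x]))) :
    ∀ᵐ ω ∂P, 0 < ⨅ t : ℕ, wμ * Pμ (List.ofFn (fun i : Fin t => ω i)) /
      Pξ (List.ofFn (fun i : Fin t => ω i)) :=
  stmt_5_general P Pμ hPμ wμ hwμ Pξ hPξ0 hdom hadd hsum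
end

section
/- If a mixture w over a countable class has finite entropy Ent(w) = ∑_ν w(ν) log(1/w(ν)) < ∞, then the expected cumulative information gain over disjoint blocks of length m starting at offset i is bounded: ∑_{k=0}^∞ E_ξ[ IG(h_{mk+i : m(k+1)+i−1} | h_{<mk+i}) ] ≤ Ent(w), where IG(h'|h) := ∑_ν w(ν|hh') log( w(ν|hh') / w(ν|h) ) and the expectation is under the mixture measure P_ξ. -/
/-!
Write `S n` for minus the expected entropy of the posterior after `n` observations. Since
`log (w(ν|hh') / w(ν|h)) = log w(ν|hh') - log w(ν|h)`, the change of measure turns the expected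
information gain of the block from `n` to `N` into `S N - S n`: the second term is the
expectation of a function of the first `n` symbols only. The blocks therefore telescope, and every
partial sum is `S (mK + i) - S i ≤ -S i`, because `S ≤ 0` (as `w(ν|h) ≤ 1`). Finally
`-S i ≤ Ent(w)`: writing `w(ν|h) = w(ν) P_ν(h) / P_ξ(h)`, this is Gibbs' inequality
`∑_h P_ν(h) log (P_ν(h) / P_ξ(h)) ≥ 0`. Gibbs' inequality over `ν` also makes each information
gain nonnegative, so the partial-sum bound bounds the whole series.
-/

open Finset

variable {H : Type*} [Fintype H] {M : Type*} [Countable M]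

/-- The Bayesian mixture probability of a finite history. -/
noncomputable def mixP (w : M → ℝ) (P : M → List H → ℝ) (h : List H) : ℝ :=
  ∑' ν, w ν * P ν h

/-- The Bayesian posterior weight w(ν|h) = w(ν)·P_ν(h)/P_ξ(h). -/
noncomputable def post (w : M → ℝ) (P : M → List H → ℝ) (ν : M) (h : List H) : ℝ :=
  w ν * P ν h / mixP w P h

/-- The information gain of observing history `g` beyond its prefix of length
`n`: the KL divergence from the new posterior to the old posterior. -/
noncomputable def infoGain (w : M → ℝ) (P : M → List H → ℝ) (n : ℕ) (g : List H) : ℝ :=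
  ∑' ν, post w P ν g * Real.log (post w P ν g / post w P ν (g.take n))

open Real

theorem sub_le_mul_log_div {p q : ℝ} (hp : 0 ≤ p) (hq : 0 ≤ q) (hpq : q = 0 → p = 0) :
    p - q ≤ p * log (p / q) := by
  rcases hp.eq_or_lt with rfl | hp
  · simpa using hq
  have hq : 0 < q := hq.lt_of_ne fun h => hp.ne' (hpq h.symm)
  calc p - q = p * (1 - (p / q)⁻¹) := by field_simp
    _ ≤ p * log (p / q) := by gcongr; exact one_sub_inv_le_log_of_pos (by positivity)

theorem tsum_mul_log_div_nonneg {ι : Type*} {p q : ι → ℝ} (hp0 : ∀ i, 0 ≤ p i)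
    (hq0 : ∀ i, 0 ≤ q i) (hpq : ∀ i, q i = 0 → p i = 0) (hp : Summable p) (hq : Summable q)
    (hqp : ∑' i, q i ≤ ∑' i, p i) : 0 ≤ ∑' i, p i * log (p i / q i) := by
  by_cases hs : Summable fun i => p i * log (p i / q i)
  · calc 0 ≤ ∑' i, (p i - q i) := by rw [hp.tsum_sub hq]; linarith
      _ ≤ ∑' i, p i * log (p i / q i) :=
        (hp.sub hq).tsum_le_tsum (fun i => sub_le_mul_log_div (hp0 i) (hq0 i) (hpq i)) hs
  · -- a divergent `tsum` takes the junk value `0`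
    rw [tsum_eq_zero_of_not_summable hs]

theorem mul_log_le_mul_log {x y z : ℝ} (hx : 0 ≤ x) (hxy : x ≤ y) (hyz : y ≤ z) (hz : z ≤ 1) :
    y * log y ≤ x * log z := by
  rcases hx.eq_or_lt with rfl | hx
  · simpa using mul_log_nonpos hxy (hyz.trans hz)
  have hy := hx.trans_le hxy
  calc y * log y ≤ x * log y := by
        nlinarith [log_nonpos hy.le (hyz.trans hz)]
    _ ≤ x * log z := by gcongr

theorem mul_log_sub_le_mul_log_mul {a b : ℝ} (ha0 : 0 ≤ a) (ha1 : a ≤ 1) (hb0 : 0 ≤ b)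
    (hb1 : b ≤ 1) : a * log a - a ≤ a * b * log (a * b) := by
  rcases ha0.eq_or_lt with rfl | ha
  · simp
  rcases hb0.eq_or_lt with rfl | hb
  · simp; linarith [mul_log_nonpos ha0 ha1]
  have hb_log : b - 1 ≤ b * log b := by
    have := one_sub_inv_le_log_of_pos hb
    have : b * (1 - b⁻¹) = b - 1 := by field_simp
    nlinarith
  rw [log_mul ha.ne' hb.ne']
  nlinarith [mul_log_nonpos ha0 ha1, mul_le_mul_of_nonneg_left hb_log ha0]

theorem Fintype.sum_ofFn_succ {α β : Type*} [Fintype α] [AddCommMonoid β] (n : ℕ)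
    (f : List α → β) :
    ∑ g : Fin (n + 1) → α, f (List.ofFn g) = ∑ g : Fin n → α, ∑ x : α, f (List.ofFn g ++ [x]) := by
  rw [← (Fin.snocEquiv fun _ => α).sum_comp, Fintype.sum_prod_type, Finset.sum_comm]
  simp only [Fin.snocEquiv, Equiv.coe_fn_mk, List.ofFn_succ', Fin.snoc_castSucc, Fin.snoc_last,
    List.concat_eq_append]

/-- `p h` is the probability that an infinite sequence starts with `h`, for some probability
measure on `H^ℕ`. -/
structure IsCylinderMeasure (p : List H → ℝ) : Prop where
  nonneg : ∀ h, 0 ≤ p h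
  apply_nil : p [] = 1
  sum_append_singleton : ∀ h, ∑ x : H, p (h ++ [x]) = p h

namespace IsCylinderMeasure

variable {p : List H → ℝ} (hp : IsCylinderMeasure p)
include hp

theorem apply_append_le (l l' : List H) : p (l ++ l') ≤ p l := by
  induction l' using List.reverseRecOn with
  | nil => simp
  | append_singleton l' x ih =>
    calc p (l ++ (l' ++ [x])) ≤ ∑ y : H, p (l ++ l' ++ [y]) := by
          rw [← List.append_assoc]
          exact Finset.single_le_sum (f := fun y => p (l ++ l' ++ [y]))
            (fun y _ => hp.nonneg _) (Finset.mem_univ x)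
      _ ≤ p l := (hp.sum_append_singleton _).trans_le ih

theorem apply_le_apply_take (l : List H) (n : ℕ) : p l ≤ p (l.take n) := by
  simpa using hp.apply_append_le (l.take n) (l.drop n)

theorem apply_le_one (l : List H) : p l ≤ 1 := by
  simpa [hp.apply_nil] using hp.apply_append_le [] l

theorem sum_ofFn_mul_take {n N : ℕ} (hnN : n ≤ N) (f : List H → ℝ) :
    ∑ g : Fin N → H, p (List.ofFn g) * f ((List.ofFn g).take n)
      = ∑ g : Fin n → H, p (List.ofFn g) * f (List.ofFn g) := by
  obtain ⟨d, rfl⟩ := Nat.exists_eq_add_of_le hnN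
  induction d with
  | zero => exact Finset.sum_congr rfl fun g _ => by rw [List.take_of_length_le (by simp)]
  | succ d ih =>
    rw [← add_assoc, Fintype.sum_ofFn_succ (n + d) fun l => p l * f (l.take n), ← ih (by omega)]
    refine Finset.sum_congr rfl fun g _ => ?_
    have htake (x : H) : (List.ofFn g ++ [x]).take n = (List.ofFn g).take n :=
      List.take_append_of_le_length (by simp)
    simp only [htake, ← Finset.sum_mul, hp.sum_append_singleton]

theorem sum_ofFn (n : ℕ) : ∑ g : Fin n → H, p (List.ofFn g) = 1 := by
  simpa [hp.apply_nil] using hp.sum_ofFn_mul_take (Nat.zero_le n) (fun _ => 1)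

end IsCylinderMeasure

variable {ι : Type*}

structure IsBayesMixture (w : ι → ℝ) (P : ι → List H → ℝ) : Prop where
  weight_nonneg : ∀ ν, 0 ≤ w ν
  hasSum_weight : HasSum w 1
  isCylinderMeasure : ∀ ν, IsCylinderMeasure (P ν)

/-- `∑_ν w(ν) E_ν[log w(ν | h_{<n})]`; by the change of measure `w(ν) P_ν = P_ξ w(ν | ·)` this is
`E_ξ[∑_ν w(ν | h_{<n}) log w(ν | h_{<n})]`, minus the expected posterior entropy after `n` steps. -/
noncomputable def expectedLogPost (w : ι → ℝ) (P : ι → List H → ℝ) (n : ℕ) : ℝ :=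
  ∑' ν, ∑ g : Fin n → H, w ν * P ν (List.ofFn g) * log (post w P ν (List.ofFn g))

theorem tsum_post {α : Type*} {w : ι → ℝ} {P : ι → List α → ℝ} {h : List α}
    (hh : mixP w P h ≠ 0) : ∑' ν, post w P ν h = 1 := by
  simp only [post]
  rw [tsum_div_const]
  exact div_self hh

namespace IsBayesMixture

variable {w : ι → ℝ} {P : ι → List H → ℝ} (hξ : IsBayesMixture w P)
include hξ

theorem weight_mul_nonneg (ν : ι) (h : List H) : 0 ≤ w ν * P ν h :=
  mul_nonneg (hξ.weight_nonneg ν) ((hξ.isCylinderMeasure ν).nonneg h)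

theorem weight_le_one (ν : ι) : w ν ≤ 1 :=
  le_hasSum hξ.hasSum_weight ν fun ν' _ => hξ.weight_nonneg ν'

theorem summable_mul (h : List H) : Summable fun ν => w ν * P ν h :=
  hξ.hasSum_weight.summable.of_nonneg_of_le (hξ.weight_mul_nonneg · h) fun ν =>
    mul_le_of_le_one_right (hξ.weight_nonneg ν) ((hξ.isCylinderMeasure ν).apply_le_one h)

theorem mul_le_mixP (ν : ι) (h : List H) : w ν * P ν h ≤ mixP w P h :=
  (hξ.summable_mul h).le_tsum ν fun ν' _ => hξ.weight_mul_nonneg ν' h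

theorem isCylinderMeasure_mixP : IsCylinderMeasure (mixP w P) where
  nonneg h := tsum_nonneg (hξ.weight_mul_nonneg · h)
  apply_nil := by simp [mixP, (hξ.isCylinderMeasure _).apply_nil, hξ.hasSum_weight.tsum_eq]
  sum_append_singleton h := by
    simp only [mixP]
    rw [← Summable.tsum_finsetSum fun x _ => hξ.summable_mul _]
    simp only [← mul_sum, (hξ.isCylinderMeasure _).sum_append_singleton]

theorem mixP_mul_post (ν : ι) (h : List H) : mixP w P h * post w P ν h = w ν * P ν h := by
  rcases eq_or_ne (mixP w P h) 0 with h0 | h0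
  · rw [h0, zero_mul]
    exact (le_antisymm (h0 ▸ hξ.mul_le_mixP ν h) (hξ.weight_mul_nonneg ν h)).symm
  · exact mul_div_cancel₀ _ h0

theorem post_nonneg (ν : ι) (h : List H) : 0 ≤ post w P ν h :=
  div_nonneg (hξ.weight_mul_nonneg ν h) (hξ.isCylinderMeasure_mixP.nonneg h)

theorem post_le_one (ν : ι) (h : List H) : post w P ν h ≤ 1 :=
  div_le_one_of_le₀ (hξ.mul_le_mixP ν h) (hξ.isCylinderMeasure_mixP.nonneg h)

theorem mul_le_post (ν : ι) (h : List H) : w ν * P ν h ≤ post w P ν h := by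
  rw [← hξ.mixP_mul_post]
  exact mul_le_of_le_one_left (hξ.post_nonneg ν h) (hξ.isCylinderMeasure_mixP.apply_le_one h)

theorem post_take_pos {ν : ι} {g : List H} (hg : 0 < w ν * P ν g) (n : ℕ) :
    0 < post w P ν (g.take n) :=
  (hg.trans_le (mul_le_mul_of_nonneg_left ((hξ.isCylinderMeasure ν).apply_le_apply_take g n)
    (hξ.weight_nonneg ν))).trans_le (hξ.mul_le_post ν _)

theorem summable_post (h : List H) : Summable fun ν => post w P ν h :=
  (hξ.summable_mul h).div_const _

theorem tsum_post_le_one (h : List H) : ∑' ν, post w P ν h ≤ 1 := by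
  simp only [post]
  rw [tsum_div_const]
  exact div_le_one_of_le₀ le_rfl (hξ.isCylinderMeasure_mixP.nonneg h)

theorem infoGain_nonneg (n : ℕ) (g : List H) : 0 ≤ infoGain w P n g := by
  rcases eq_or_ne (mixP w P g) 0 with h0 | h0
  · simp [infoGain, post, h0]
  refine tsum_mul_log_div_nonneg (hξ.post_nonneg · g) (hξ.post_nonneg · _) (fun ν hq => ?_)
    (hξ.summable_post g) (hξ.summable_post _)
    ((hξ.tsum_post_le_one _).trans (tsum_post h0).ge)
  by_contra hp
  have hg : w ν * P ν g ≠ 0 := fun h => hp (by simp [post, h])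
  exact (hξ.post_take_pos ((hξ.weight_mul_nonneg ν g).lt_of_ne' hg) n).ne' hq

theorem mul_mul_log_post_nonpos (ν : ι) (g h : List H) :
    w ν * P ν g * log (post w P ν h) ≤ 0 :=
  mul_nonpos_of_nonneg_of_nonpos (hξ.weight_mul_nonneg ν g)
    (log_nonpos (hξ.post_nonneg ν h) (hξ.post_le_one ν h))

theorem mul_log_sub_le_mul_mul_log_post_take (ν : ι) (g : List H) (n : ℕ) :
    w ν * log (w ν) - w ν ≤ w ν * P ν g * log (post w P ν (g.take n)) :=
  (mul_log_sub_le_mul_log_mul (hξ.weight_nonneg ν) (hξ.weight_le_one ν)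
    ((hξ.isCylinderMeasure ν).nonneg (g.take n)) ((hξ.isCylinderMeasure ν).apply_le_one _)).trans
  (mul_log_le_mul_log (hξ.weight_mul_nonneg ν g)
    (mul_le_mul_of_nonneg_left ((hξ.isCylinderMeasure ν).apply_le_apply_take g n)
      (hξ.weight_nonneg ν))
    (hξ.mul_le_post ν _) (hξ.post_le_one ν _))

theorem mul_log_le_sum_mul_mul_log_post (ν : ι) (n : ℕ) :
    w ν * log (w ν) ≤
      ∑ g : Fin n → H, w ν * P ν (List.ofFn g) * log (post w P ν (List.ofFn g)) := by
  have hterm (h : List H) : w ν * P ν h * log (w ν) + w ν * (P ν h - mixP w P h) ≤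
      w ν * P ν h * log (post w P ν h) := by
    rcases (hξ.weight_nonneg ν).eq_or_lt with hw | hw
    · simp [← hw]
    rcases ((hξ.isCylinderMeasure ν).nonneg h).eq_or_lt with hp | hp
    · simp only [← hp, mul_zero, zero_mul, zero_sub, zero_add, mul_neg, neg_nonpos]
      exact mul_nonneg hw.le (hξ.isCylinderMeasure_mixP.nonneg h)
    have hq : 0 < mixP w P h := (mul_pos hw hp).trans_le (hξ.mul_le_mixP ν h)
    rw [post, mul_div_assoc, log_mul hw.ne' (div_pos hp hq).ne']
    have hgibbs := sub_le_mul_log_div hp.le hq.le fun h => absurd h hq.ne'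
    nlinarith
  calc w ν * log (w ν)
      = ∑ g : Fin n → H, (w ν * P ν (List.ofFn g) * log (w ν)
          + w ν * (P ν (List.ofFn g) - mixP w P (List.ofFn g))) := by
        rw [sum_add_distrib, ← sum_mul, ← mul_sum, ← mul_sum, sum_sub_distrib,
          (hξ.isCylinderMeasure ν).sum_ofFn, hξ.isCylinderMeasure_mixP.sum_ofFn]
        ring
    _ ≤ _ := sum_le_sum fun g _ => hterm _

theorem expectedLogPost_nonpos (n : ℕ) : expectedLogPost w P n ≤ 0 :=
  tsum_nonpos fun ν => sum_nonpos fun _ _ => hξ.mul_mul_log_post_nonpos ν _ _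

variable (hent : Summable fun ν => w ν * log (w ν))
include hent

theorem summable_mul_mul_log_post_take (g : List H) (n : ℕ) :
    Summable fun ν => w ν * P ν g * log (post w P ν (g.take n)) := by
  rw [← summable_neg_iff]
  refine (hent.neg.add hξ.hasSum_weight.summable).of_nonneg_of_le
    (fun ν => neg_nonneg.2 (hξ.mul_mul_log_post_nonpos ν g _)) fun ν => ?_
  linarith [hξ.mul_log_sub_le_mul_mul_log_post_take ν g n]

theorem summable_mul_mul_log_post (g : List H) :
    Summable fun ν => w ν * P ν g * log (post w P ν g) := by
  simpa using hξ.summable_mul_mul_log_post_take hent g g.length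

theorem mixP_mul_infoGain (n : ℕ) (g : List H) :
    mixP w P g * infoGain w P n g = ∑' ν, w ν * P ν g * log (post w P ν g)
      - ∑' ν, w ν * P ν g * log (post w P ν (g.take n)) := by
  rw [infoGain, ← tsum_mul_left, ← (hξ.summable_mul_mul_log_post hent g).tsum_sub
    (hξ.summable_mul_mul_log_post_take hent g n)]
  refine tsum_congr fun ν => ?_
  rw [← mul_assoc, hξ.mixP_mul_post, ← mul_sub]
  rcases (hξ.weight_mul_nonneg ν g).eq_or_lt with h0 | hpos
  · rw [← h0, zero_mul, zero_mul]
  · rw [log_div (hpos.trans_le (hξ.mul_le_post ν g)).ne' (hξ.post_take_pos hpos n).ne']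

theorem tsum_mul_log_le_expectedLogPost (n : ℕ) :
    ∑' ν, w ν * log (w ν) ≤ expectedLogPost w P n :=
  hent.tsum_le_tsum (hξ.mul_log_le_sum_mul_mul_log_post · n)
    (summable_sum fun _ _ => hξ.summable_mul_mul_log_post hent _)

theorem sum_mixP_mul_infoGain {n N : ℕ} (hnN : n ≤ N) :
    ∑ g : Fin N → H, mixP w P (List.ofFn g) * infoGain w P n (List.ofFn g)
      = expectedLogPost w P N - expectedLogPost w P n := by
  simp only [hξ.mixP_mul_infoGain hent, sum_sub_distrib, expectedLogPost]
  rw [← Summable.tsum_finsetSum fun _ _ => hξ.summable_mul_mul_log_post hent _,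
    ← Summable.tsum_finsetSum fun _ _ => hξ.summable_mul_mul_log_post_take hent _ n]
  congr 1
  refine tsum_congr fun ν => ?_
  simp only [mul_assoc, ← mul_sum]
  rw [(hξ.isCylinderMeasure ν).sum_ofFn_mul_take hnN fun h => log (post w P ν h)]

end IsBayesMixture

/-- If the prior w over a countable environment class has finite entropy
Ent(w) = ∑_ν w(ν)·log(1/w(ν)) < ∞, then the expected cumulative information
gain under the mixture measure, over disjoint blocks of length m starting at
offset i, is bounded by Ent(w):
∑_{k=0}^∞ E_ξ[ IG(h_{mk+i : m(k+1)+i−1} | h_{<mk+i}) ] ≤ Ent(w). -/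
theorem stmt_9
    (w : M → ℝ) (hw : ∀ ν, 0 ≤ w ν) (hwsum : ∑' ν, w ν = 1)
    (hwsummable : Summable w)
    (hEnt : Summable (fun ν => w ν * Real.log (1 / w ν)))
    (P : M → List H → ℝ) (hP0 : ∀ ν h, 0 ≤ P ν h)
    (hPnil : ∀ ν, P ν ([] : List H) = 1)
    (hPadd : ∀ ν h, ∑ x : H, P ν (h ++ [x]) = P ν h)
    (m i : ℕ) :
    (∑' k : ℕ, ∑ g : Fin (m * (k + 1) + i) → H,
        mixP w P (List.ofFn g) *
          infoGain w P (m * k + i) (List.ofFn g)) ≤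
      ∑' ν, w ν * Real.log (1 / w ν) := by
  have hξ : IsBayesMixture w P :=
    ⟨hw, hwsummable.hasSum_iff.2 hwsum, fun ν => ⟨hP0 ν, hPnil ν, hPadd ν⟩⟩
  have hent : Summable fun ν => w ν * log (w ν) := by simpa using hEnt.neg
  have hEnt_eq : ∑' ν, w ν * log (1 / w ν) = -∑' ν, w ν * log (w ν) := by
    simp [tsum_neg]
  refine Real.tsum_le_of_sum_range_le (fun k => sum_nonneg fun _ _ =>
    mul_nonneg (hξ.isCylinderMeasure_mixP.nonneg _) (hξ.infoGain_nonneg _ _)) fun K => ?_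
  have hblock (k : ℕ) : m * k + i ≤ m * (k + 1) + i := by gcongr; omega
  rw [sum_congr rfl fun k _ => hξ.sum_mixP_mul_infoGain hent (hblock k),
    sum_range_sub (fun k => expectedLogPost w P (m * k + i))]
  linarith [hξ.expectedLogPost_nonpos (m * K + i),
    hξ.tsum_mul_log_le_expectedLogPost hent (m * 0 + i)]
end
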